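/- arXiv:2104.05128 — 2 statements merged into one kernel-verified Lean document; each statement's English description precedes it below -/
import Mathlib

section
/- Once the fact CreatedUsing(y, z) (with y = (y,A,C) and z = (z,B,C)) is in actor A's knowledge set, it remains in A's knowledge set until after A has sent an Info message containing z to C. -/
namespace DRL

structure Refob where
  token : ℕ
  owner : ℕ
  target : ℕ
  deriving DecidableEq

inductive Fact where
  | created : Refob → Fact
  | released : Refob → Fact
  | createdUsing : Refob → Refob → Fact
  | activated : Refob → Fact
  | sentCount : Refob → ℕ → Fact
  | recvCount : Refob → ℕ → Fact
  deriving DecidableEq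

/-- Derivability of facts from a knowledge set, including the additional
rules for zero message counts and `CreatedUsing`-derived `Created` facts. -/
inductive Entails (Φ : Set Fact) : Fact → Prop where
  | mem {φ : Fact} : φ ∈ Φ → Entails Φ φ
  | sentZero {x : Refob} : (∀ n, Fact.sentCount x n ∉ Φ) → Entails Φ (Fact.sentCount x 0)
  | recvZero {x : Refob} : (∀ n, Fact.recvCount x n ∉ Φ) → Entails Φ (Fact.recvCount x 0)
  | createdOfUsing {x y : Refob} :
      Entails Φ (Fact.createdUsing x y) → Entails Φ (Fact.created y)

def Fact.refobs : Fact → Set Refob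
  | .created x => {x}
  | .released x => {x}
  | .createdUsing x y => {x, y}
  | .activated x => {x}
  | .sentCount x _ => {x}
  | .recvCount x _ => {x}

/-- A set of snapshots: a partial map from actor addresses to knowledge sets. -/
abbrev Snap := ℕ → Option (Set Fact)

namespace Snap

def dom (Q : Snap) : Set ℕ := {A | Q A ≠ none}

/-- `Q ⊢ φ`: some snapshot in `Q` entails `φ`. -/
def entails (Q : Snap) (φ : Fact) : Prop := ∃ A Φ, Q A = some Φ ∧ Entails Φ φ

noncomputable def restrict (Q : Snap) (S : Set ℕ) : Snap :=
  fun A => haveI := Classical.propDecidable (A ∈ S); if A ∈ S then Q A else none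

def union (Q1 Q2 : Snap) : Snap := fun A => (Q1 A).orElse fun _ => Q2 A

def get (Q : Snap) (A : ℕ) : Set Fact := (Q A).getD ∅

end Snap

/-- `Q ⊢ Chain((x,A,B))`: there are refobs `(x1,A1,B),...,(xn,An,B)` with
`Q ⊢ Created(x1)`, `Q ⊬ Released(x1)`, for all `i < n` both
`Q ⊢ CreatedUsing(xi, x(i+1))` and `Q ⊬ Released(x(i+1))`, and `(xn,An,B) = (x,A,B)`. -/
def ChainQ (Q : Snap) (x : Refob) : Prop :=
  ∃ (n : ℕ) (c : Fin (n + 1) → Refob),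
    (∀ i, (c i).target = x.target) ∧
    Q.entails (Fact.created (c 0)) ∧ ¬ Q.entails (Fact.released (c 0)) ∧
    (∀ i : Fin n, Q.entails (Fact.createdUsing (c i.castSucc) (c i.succ)) ∧
      ¬ Q.entails (Fact.released (c i.succ))) ∧
    c (Fin.last n) = x

/-- `Q ⊢ Relevant(x)`. -/
def RelevantQ (Q : Snap) (x : Refob) : Prop :=
  ∃ n, Q.entails (Fact.activated x) ∧ Q.entails (Fact.sentCount x n) ∧
    Q.entails (Fact.recvCount x n)

/-- `Q ⊢ Unreleased(x)`. -/
def UnreleasedQ (Q : Snap) (x : Refob) : Prop :=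
  Q.entails (Fact.created x) ∧ ¬ Q.entails (Fact.released x)

/-- `Q` is finalized: for each refob `x` targeting a member of `dom Q`,
`Q ⊢ Chain(x)` implies the owner of `x` is in `dom Q` and `Q ⊢ Relevant(x)`. -/
def Finalized (Q : Snap) : Prop :=
  ∀ x : Refob, x.target ∈ Q.dom → ChainQ Q x → x.owner ∈ Q.dom ∧ RelevantQ Q x

/-- `Qf` is a subset of `Q` (as snapshot sets). -/
def Subsnap (Qf Q : Snap) : Prop := ∀ A Φ, Qf A = some Φ → Q A = some Φ

/-- `DependsOn Q B A`: `B` depends on `A` in `Q`, i.e. `A = B` or there is a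
sequence of refobs `(x1,A1,A2),...,(xn,A(n-1),An)` with `A = A1`, `B = An`,
and `Q ⊢ Chain(xi)` for each `i`. -/
def DependsOn (Q : Snap) (B A : ℕ) : Prop :=
  Relation.ReflTransGen (fun C D => ∃ x : Refob, x.owner = C ∧ x.target = D ∧ ChainQ Q x) A B

/-- `PotDependsOn Q B A`: `B` potentially depends on `A` in `Q` (via `Unreleased` refobs). -/
def PotDependsOn (Q : Snap) (B A : ℕ) : Prop :=
  Relation.ReflTransGen
    (fun C D => ∃ x : Refob, x.owner = C ∧ x.target = D ∧ UnreleasedQ Q x) A B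

/-- `C` is finalized in `Q`: for every `B` on which `C` depends and every refob
targeting `B`, `Q ⊢ Chain(x)` implies `Q ⊢ Relevant(x)`. -/
def FinalizedIn (Q : Snap) (C : ℕ) : Prop :=
  ∀ B, DependsOn Q C B → ∀ x : Refob, x.target = B → ChainQ Q x → RelevantQ Q x

inductive Status where
  | busy | idle
  deriving DecidableEq

inductive Message where
  | app : Refob → Set Refob → Message
  | info : Refob → Refob → Message
  | rel : Refob → ℕ → Message

/-- The refob a message is sent along. -/
def Message.refob : Message → Refob
  | .app x _ => x
  | .info y _ => y
  | .rel x _ => x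

def Message.refobs : Message → Set Refob
  | .app x R => insert x R
  | .info y z => {y, z}
  | .rel x _ => {x}

structure Config where
  actors : ℕ → Option (Status × Set Fact)
  msgs : ℕ → Multiset Message
  recep : Set ℕ
  ext : Set ℕ

namespace Config

def tokens (k : Config) : Set ℕ :=
  {t | (∃ A s Φ, k.actors A = some (s, Φ) ∧ ∃ φ ∈ Φ, ∃ r ∈ Fact.refobs φ, r.token = t) ∨
       (∃ A, ∃ m ∈ k.msgs A, ∃ r ∈ Message.refobs m, r.token = t)}

def freshAddr (k : Config) (B : ℕ) : Prop := k.actors B = none ∧ B ∉ k.ext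

def setActor (k : Config) (A : ℕ) (s : Status) (Φ : Set Fact) : Config :=
  { k with actors := Function.update k.actors A (some (s, Φ)) }

def pushMsg (k : Config) (B : ℕ) (m : Message) : Config :=
  { k with msgs := Function.update k.msgs B (m ::ₘ k.msgs B) }

/-- The knowledge set of an actor. -/
def ks (k : Config) (A : ℕ) : Option (Set Fact) := (k.actors A).map Prod.snd

def isIdle (k : Config) (A : ℕ) : Prop := ∃ Φ, k.actors A = some (Status.idle, Φ)

def internal (k : Config) (A : ℕ) : Prop := k.actors A ≠ none

/-- Blocked: idle, not a receptionist, and no undelivered messages. -/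
def blocked (k : Config) (A : ℕ) : Prop := k.isIdle A ∧ A ∉ k.recep ∧ k.msgs A = 0

end Config

def IncSent (x : Refob) (Φ : Set Fact) : Set Fact :=
  {φ ∈ Φ | ∀ n, φ ≠ Fact.sentCount x n} ∪
  (fun n => Fact.sentCount x (n + 1)) ''
    {n | Fact.sentCount x n ∈ Φ ∨ (n = 0 ∧ ∀ m, Fact.sentCount x m ∉ Φ)}

def IncRecv (x : Refob) (Φ : Set Fact) : Set Fact :=
  {φ ∈ Φ | ∀ n, φ ≠ Fact.recvCount x n} ∪
  (fun n => Fact.recvCount x (n + 1)) ''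
    {n | Fact.recvCount x n ∈ Φ ∨ (n = 0 ∧ ∀ m, Fact.recvCount x m ∉ Φ)}

inductive Event where
  | spawn (x y A B : ℕ)
  | send (x : Refob) (l : List (Refob × Refob)) (A B : ℕ)
  | receive (x : Refob) (B : ℕ) (R : Set Refob)
  | idle (A : ℕ)
  | sendInfo (y z : Refob) (A : ℕ)
  | info (y z : Refob) (C : ℕ)
  | sendRelease (x : Refob) (n : ℕ) (A : ℕ)
  | release (x : Refob) (n : ℕ) (B : ℕ)
  | compaction (x : Refob) (C : ℕ)
  | snapshot (A : ℕ) (Φ : Set Fact)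
  | inp (x : Refob) (A : ℕ) (R : Set Refob)
  | out (x : Refob) (B : ℕ) (R : Set Refob)
  | releaseOut (x : Refob) (n : ℕ) (B : ℕ)
  | infoOut (y z : Refob) (C : ℕ)

/-- The DRL system-level transition rules. -/
inductive Step : Config → Event → Config → Prop where
  | spawn {k : Config} {Φ : Set Fact} {x y A B : ℕ} :
      k.actors A = some (Status.busy, Φ) →
      k.freshAddr B → x ∉ k.tokens → y ∉ k.tokens → x ≠ y →
      Step k (Event.spawn x y A B)
        ((k.setActor A Status.busy (Φ ∪ {Fact.activated ⟨x, A, B⟩})).setActor B Status.busy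
          {Fact.created ⟨x, A, B⟩, Fact.created ⟨y, B, B⟩, Fact.activated ⟨y, B, B⟩})
  | send {k : Config} {Φ : Set Fact} {x : Refob} {l : List (Refob × Refob)} {A B : ℕ} :
      k.actors A = some (Status.busy, Φ) →
      x.owner = A → x.target = B → Entails Φ (Fact.activated x) →
      (∀ p ∈ l, Entails Φ (Fact.activated p.1) ∧ p.1.owner = A ∧
        p.2.owner = B ∧ p.2.target = p.1.target ∧ p.2.token ∉ k.tokens) →
      (l.map fun p => p.2.token).Nodup →
      Step k (Event.send x l A B)
        ((k.setActor A Status.busy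
            (IncSent x Φ ∪ {φ | ∃ p ∈ l, φ = Fact.createdUsing p.1 p.2})).pushMsg B
          (Message.app x {r | ∃ p ∈ l, r = p.2}))
  | receive {k : Config} {Φ : Set Fact} {μ : Multiset Message} {x : Refob} {B : ℕ}
      {R : Set Refob} :
      k.actors B = some (Status.idle, Φ) → x.target = B →
      k.msgs B = Message.app x R ::ₘ μ →
      Step k (Event.receive x B R)
        { k.setActor B Status.busy (IncRecv x Φ ∪ Fact.activated '' R) with
          msgs := Function.update k.msgs B μ }
  | idle {k : Config} {Φ : Set Fact} {A : ℕ} :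
      k.actors A = some (Status.busy, Φ) →
      Step k (Event.idle A) (k.setActor A Status.idle Φ)
  | sendInfo {k : Config} {Φ : Set Fact} {y z : Refob} {A : ℕ} :
      k.actors A = some (Status.busy, Φ) →
      y.owner = A → Fact.createdUsing y z ∈ Φ → y.target = z.target →
      Step k (Event.sendInfo y z A)
        ((k.setActor A Status.busy (IncSent y (Φ \ {Fact.createdUsing y z}))).pushMsg y.target
          (Message.info y z))
  | info {k : Config} {Φ : Set Fact} {μ : Multiset Message} {y z : Refob} {C : ℕ} :
      k.actors C = some (Status.idle, Φ) → y.target = C →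
      k.msgs C = Message.info y z ::ₘ μ →
      Step k (Event.info y z C)
        { k.setActor C Status.idle (IncRecv y Φ ∪ {Fact.created z}) with
          msgs := Function.update k.msgs C μ }
  | sendRelease {k : Config} {Φ : Set Fact} {x : Refob} {n A : ℕ} :
      k.actors A = some (Status.busy, Φ) → x.owner = A →
      Entails Φ (Fact.activated x) → Entails Φ (Fact.sentCount x n) →
      (∀ y, Fact.createdUsing x y ∉ Φ) →
      Step k (Event.sendRelease x n A)
        ((k.setActor A Status.busy
            {φ ∈ Φ | φ ≠ Fact.activated x ∧ ∀ m, φ ≠ Fact.sentCount x m}).pushMsg x.target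
          (Message.rel x n))
  | release {k : Config} {Φ : Set Fact} {μ : Multiset Message} {x : Refob} {n B : ℕ} :
      k.actors B = some (Status.idle, Φ) → x.target = B →
      k.msgs B = Message.rel x n ::ₘ μ →
      Entails Φ (Fact.recvCount x n) →
      Step k (Event.release x n B)
        { k.setActor B Status.idle (Φ ∪ {Fact.released x}) with
          msgs := Function.update k.msgs B μ }
  | compaction {k : Config} {Φ : Set Fact} {x : Refob} {C : ℕ} :
      k.actors C = some (Status.idle, Φ) → x.target = C →
      Fact.created x ∈ Φ → Fact.released x ∈ Φ →
      Step k (Event.compaction x C)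
        (k.setActor C Status.idle
          {φ ∈ Φ | φ ≠ Fact.created x ∧ φ ≠ Fact.released x ∧ ∀ n, φ ≠ Fact.recvCount x n})
  | snapshot {k : Config} {Φ : Set Fact} {A : ℕ} :
      k.actors A = some (Status.idle, Φ) →
      Step k (Event.snapshot A Φ) k
  | inp {k : Config} {x : Refob} {A : ℕ} {R : Set Refob} :
      A ∈ k.recep → x.target = A → x.owner ∈ k.ext →
      (∀ r ∈ R, r.owner = A ∧ r.token ∉ k.tokens ∧ (k.internal r.target → r.target ∈ k.recep)) →
      (∀ r ∈ R, ∀ r' ∈ R, r.token = r'.token → r = r') →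
      Step k (Event.inp x A R)
        { k.pushMsg A (Message.app x R) with
          ext := k.ext ∪ {C | ∃ r ∈ R, r.target = C ∧ k.actors C = none} }
  | out {k : Config} {μ : Multiset Message} {x : Refob} {B : ℕ} {R : Set Refob} :
      B ∈ k.ext → k.msgs B = Message.app x R ::ₘ μ →
      (∀ r ∈ R, r.owner = B) →
      Step k (Event.out x B R)
        { k with msgs := Function.update k.msgs B μ,
                 recep := k.recep ∪ {C | ∃ r ∈ R, r.target = C ∧ k.actors C ≠ none} }
  | releaseOut {k : Config} {μ : Multiset Message} {x : Refob} {n B : ℕ} :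
      B ∈ k.ext → k.msgs B = Message.rel x n ::ₘ μ →
      Step k (Event.releaseOut x n B) { k with msgs := Function.update k.msgs B μ }
  | infoOut {k : Config} {μ : Multiset Message} {y z : Refob} {C : ℕ} :
      C ∈ k.ext → k.msgs C = Message.info y z ::ₘ μ →
      Step k (Event.infoOut y z C) { k with msgs := Function.update k.msgs C μ }

/-- The initial configuration: one busy internal actor with a self-refob and a
refob to one external actor. -/
def Initial (k : Config) : Prop :=
  ∃ (A E x y : ℕ), A ≠ E ∧ x ≠ y ∧
    k.actors = Function.update (fun _ => none) A
      (some (Status.busy,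
        {Fact.activated ⟨x, A, E⟩, Fact.created ⟨y, A, A⟩, Fact.activated ⟨y, A, A⟩})) ∧
    k.msgs = (fun _ => 0) ∧ k.recep = ∅ ∧ k.ext = {E}

def StepAny (k k' : Config) : Prop := ∃ e, Step k e k'

/-- An execution: a sequence of events and configurations starting from the
initial configuration. A configuration is derivable from the initial
configuration iff it occurs in some execution. -/
structure Exec where
  cfg : ℕ → Config
  ev : ℕ → Event
  init : Initial (cfg 0)
  step : ∀ t, Step (cfg t) (ev t) (cfg (t + 1))

/-- The refobs created by an event. -/
def Event.creates : Event → Set Refob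
  | .spawn x y A B => {⟨x, A, B⟩, ⟨y, B, B⟩}
  | .send _ l _ _ => {r | ∃ p ∈ l, r = p.2}
  | .inp x _ R => insert x R
  | _ => ∅

def Event.releases : Event → Refob → Prop
  | .release x _ _, r => r = x
  | _, _ => False

def Event.deactivates : Event → Refob → Prop
  | .sendRelease x _ _, r => r = x
  | _, _ => False

def Event.sendsAlong : Event → Refob → Prop
  | .send x _ _ _, r => r = x
  | .sendInfo y _ _, r => r = y
  | _, _ => False

def Event.receivesAlong : Event → Refob → Prop
  | .receive x _ _, r => r = x
  | .info y _ _, r => r = y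
  | _, _ => False

/-- `e.isNonSnapshotOf D`: `e` is a non-`Snapshot` event performed by actor `D`. -/
def Event.isNonSnapshotOf : Event → ℕ → Prop
  | .spawn _ _ A B, D => D = A ∨ D = B
  | .send _ _ A _, D => D = A
  | .receive _ B _, D => D = B
  | .idle A, D => D = A
  | .sendInfo _ _ A, D => D = A
  | .info _ _ C, D => D = C
  | .sendRelease _ _ A, D => D = A
  | .release _ _ B, D => D = B
  | .compaction _ C, D => D = C
  | _, _ => False

def Event.isIdleInfoReleaseOf : Event → ℕ → Prop
  | .idle A, D => D = A
  | .info _ _ C, D => D = C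
  | .release _ _ B, D => D = B
  | _, _ => False

namespace Exec

/-- `r` has been created strictly before time `t` (initial refobs count as created). -/
def createdBy (e : Exec) (t : ℕ) (r : Refob) : Prop :=
  (∃ s < t, r ∈ (e.ev s).creates) ∨
  (∃ A st Φ, (e.cfg 0).actors A = some (st, Φ) ∧ ∃ φ ∈ Φ, r ∈ Fact.refobs φ)

/-- `r` is an unreleased refob at time `t`: it has been created and its target
has not yet processed a `Release` message for it. -/
def unreleased (e : Exec) (t : ℕ) (r : Refob) : Prop :=
  e.createdBy t r ∧ ¬ ∃ s < t, (e.ev s).releases r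

/-- The number of messages sent along `x` strictly before time `t`. -/
noncomputable def sentCt (e : Exec) (x : Refob) (t : ℕ) : ℕ :=
  Set.ncard {s | s < t ∧ (e.ev s).sendsAlong x}

/-- The number of messages received along `x` strictly before time `t`. -/
noncomputable def recvCt (e : Exec) (x : Refob) (t : ℕ) : ℕ :=
  Set.ncard {s | s < t ∧ (e.ev s).receivesAlong x}

end Exec

/-- A chain to the refob `x` in the configuration at time `t`. -/
def ChainC (e : Exec) (t : ℕ) (x : Refob) : Prop :=
  ∃ (n : ℕ) (c : Fin (n + 1) → Refob),
    (∀ i, (c i).target = x.target ∧ e.unreleased t (c i)) ∧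
    (∃ Φ, (e.cfg t).ks x.target = some Φ ∧ Entails Φ (Fact.created (c 0))) ∧
    (∀ i : Fin n,
      (∃ Φ, (e.cfg t).ks (c i.castSucc).owner = some Φ ∧
        Entails Φ (Fact.createdUsing (c i.castSucc) (c i.succ))) ∨
      Message.info (c i.castSucc) (c i.succ) ∈ (e.cfg t).msgs x.target) ∧
    c (Fin.last n) = x

/-- `B` is in the root set: a receptionist, or referenced in an in-flight
application message to an external actor. -/
def RootSet (k : Config) (B : ℕ) : Prop :=
  B ∈ k.recep ∨
    ∃ C, C ∈ k.ext ∧ ∃ m ∈ k.msgs C, ∃ x R, m = Message.app x R ∧ ∃ r ∈ R, r.target = B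

/-- An actor is terminated if it is idle and cannot potentially receive a message. -/
def Terminated (k : Config) (A : ℕ) : Prop :=
  k.isIdle A ∧ ∀ k', Relation.ReflTransGen StepAny k k' → k'.msgs A = 0

/-- `B` can potentially reach `A` at time `t` (reflexive transitive closure of
the potential acquaintance relation given by unreleased refobs). -/
def PotReach (e : Exec) (t : ℕ) (B A : ℕ) : Prop :=
  Relation.ReflTransGen
    (fun C D => ∃ x : Refob, e.unreleased t x ∧ x.owner = C ∧ x.target = D) B A


lemma step_preserve {k k' : Config} {ev : Event} (hstep : Step k ev k')
    (y z : Refob) (Φ : Set Fact) (hks : k.ks y.owner = some Φ)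
    (hmem : Fact.createdUsing y z ∈ Φ) (hne : ev ≠ Event.sendInfo y z y.owner) :
    ∃ Φ', k'.ks y.owner = some Φ' ∧ Fact.createdUsing y z ∈ Φ' := by
  cases hstep with
  | @spawn Φ₁ x' y' A B hA hfresh _ _ _ =>
      by_cases hB : y.owner = B
      · exfalso
        have := hfresh.1
        rw [hB] at hks
        simp [Config.ks, this] at hks
      · by_cases hAo : y.owner = A
        · refine ⟨Φ₁ ∪ {Fact.activated ⟨x', A, B⟩}, ?_, ?_⟩
          · have hAB : A ≠ B := hAo ▸ hB
            simp [Config.ks, Config.setActor, Function.update_apply, hB, hAo, hAB]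
          · left
            rw [hAo] at hks
            simp [Config.ks, hA] at hks
            rwa [hks]
        · refine ⟨Φ, ?_, hmem⟩
          simpa [Config.ks, Config.setActor, Function.update_apply, hB, hAo] using hks
  | @send Φ₁ x' l A B hA _ _ _ _ _ =>
      by_cases hAo : y.owner = A
      · refine ⟨IncSent x' Φ₁ ∪ {φ | ∃ p ∈ l, φ = Fact.createdUsing p.1 p.2}, ?_, ?_⟩
        · simp [Config.ks, Config.setActor, Config.pushMsg, Function.update_apply, hAo]
        · left; left
          rw [hAo] at hks
          simp [Config.ks, hA] at hks
          exact ⟨by rwa [hks], fun n => by simp⟩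
      · refine ⟨Φ, ?_, hmem⟩
        simpa [Config.ks, Config.setActor, Config.pushMsg, Function.update_apply, hAo] using hks
  | @receive Φ₁ μ x' B R hB _ _ =>
      by_cases hAo : y.owner = B
      · refine ⟨IncRecv x' Φ₁ ∪ Fact.activated '' R, ?_, ?_⟩
        · simp [Config.ks, Config.setActor, Function.update_apply, hAo]
        · left; left
          rw [hAo] at hks
          simp [Config.ks, hB] at hks
          exact ⟨by rwa [hks], fun n => by simp⟩
      · refine ⟨Φ, ?_, hmem⟩
        simpa [Config.ks, Config.setActor, Function.update_apply, hAo] using hks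
  | @idle Φ₁ A hA =>
      by_cases hAo : y.owner = A
      · refine ⟨Φ₁, ?_, ?_⟩
        · simp [Config.ks, Config.setActor, Function.update_apply, hAo]
        · rw [hAo] at hks
          simp [Config.ks, hA] at hks
          rwa [hks]
      · refine ⟨Φ, ?_, hmem⟩
        simpa [Config.ks, Config.setActor, Function.update_apply, hAo] using hks
  | @sendInfo Φ₁ y' z' A hA hyo _ _ =>
      by_cases hAo : y.owner = A
      · have hne' : ¬(y' = y ∧ z' = z) := by
          rintro ⟨rfl, rfl⟩
          exact hne (by rw [hAo])
        refine ⟨IncSent y' (Φ₁ \ {Fact.createdUsing y' z'}), ?_, ?_⟩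
        · simp [Config.ks, Config.setActor, Config.pushMsg, Function.update_apply, hAo]
        · left
          rw [hAo] at hks
          simp [Config.ks, hA] at hks
          refine ⟨⟨by rwa [hks], ?_⟩, fun n => by simp⟩
          simp only [Set.mem_singleton_iff, Fact.createdUsing.injEq]
          rintro ⟨rfl, rfl⟩
          exact hne' ⟨rfl, rfl⟩
      · refine ⟨Φ, ?_, hmem⟩
        simpa [Config.ks, Config.setActor, Config.pushMsg, Function.update_apply, hAo] using hks
  | @info Φ₁ μ y' z' C hC _ _ =>
      by_cases hAo : y.owner = C
      · refine ⟨IncRecv y' Φ₁ ∪ {Fact.created z'}, ?_, ?_⟩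
        · simp [Config.ks, Config.setActor, Function.update_apply, hAo]
        · left; left
          rw [hAo] at hks
          simp [Config.ks, hC] at hks
          exact ⟨by rwa [hks], fun n => by simp⟩
      · refine ⟨Φ, ?_, hmem⟩
        simpa [Config.ks, Config.setActor, Function.update_apply, hAo] using hks
  | @sendRelease Φ₁ x' n A hA _ _ _ _ =>
      by_cases hAo : y.owner = A
      · refine ⟨{φ ∈ Φ₁ | φ ≠ Fact.activated x' ∧ ∀ m, φ ≠ Fact.sentCount x' m}, ?_, ?_⟩
        · simp [Config.ks, Config.setActor, Config.pushMsg, Function.update_apply, hAo]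
        · rw [hAo] at hks
          simp [Config.ks, hA] at hks
          exact ⟨by rwa [hks], by simp, fun m => by simp⟩
      · refine ⟨Φ, ?_, hmem⟩
        simpa [Config.ks, Config.setActor, Config.pushMsg, Function.update_apply, hAo] using hks
  | @release Φ₁ μ x' n B hB _ _ _ =>
      by_cases hAo : y.owner = B
      · refine ⟨Φ₁ ∪ {Fact.released x'}, ?_, ?_⟩
        · simp [Config.ks, Config.setActor, Function.update_apply, hAo]
        · left
          rw [hAo] at hks
          simp [Config.ks, hB] at hks
          rwa [hks]
      · refine ⟨Φ, ?_, hmem⟩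
        simpa [Config.ks, Config.setActor, Function.update_apply, hAo] using hks
  | @compaction Φ₁ x' C hC _ _ _ =>
      by_cases hAo : y.owner = C
      · refine ⟨{φ ∈ Φ₁ | φ ≠ Fact.created x' ∧ φ ≠ Fact.released x' ∧ ∀ n, φ ≠ Fact.recvCount x' n}, ?_, ?_⟩
        · simp [Config.ks, Config.setActor, Function.update_apply, hAo]
        · rw [hAo] at hks
          simp [Config.ks, hC] at hks
          exact ⟨by rwa [hks], by simp, by simp, fun m => by simp⟩
      · refine ⟨Φ, ?_, hmem⟩
        simpa [Config.ks, Config.setActor, Function.update_apply, hAo] using hks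
  | snapshot hA => exact ⟨Φ, hks, hmem⟩
  | inp _ _ _ _ _ => exact ⟨Φ, by simpa [Config.ks, Config.pushMsg] using hks, hmem⟩
  | out _ _ _ => exact ⟨Φ, by simpa [Config.ks] using hks, hmem⟩
  | releaseOut _ _ => exact ⟨Φ, by simpa [Config.ks] using hks, hmem⟩
  | infoOut _ _ => exact ⟨Φ, by simpa [Config.ks] using hks, hmem⟩

/-- Once `CreatedUsing(y,z)` (with `y = (y,A,C)`, `z = (z,B,C)`) is
in `A`'s knowledge set, it remains there until after `A` has sent an `Info`
message containing `z` to `C` (i.e., performed `SendInfo(y,z,A)`). -/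
theorem stmt1 (e : Exec) (t t' : ℕ) (htt' : t ≤ t') (y z : Refob) (Φ : Set Fact)
    (hks : (e.cfg t).ks y.owner = some Φ) (hmem : Fact.createdUsing y z ∈ Φ)
    (hnoinfo : ∀ s, t ≤ s → s < t' → e.ev s ≠ Event.sendInfo y z y.owner) :
    ∃ Φ', (e.cfg t').ks y.owner = some Φ' ∧ Fact.createdUsing y z ∈ Φ' := by
  induction t', htt' using Nat.le_induction with
  | base => exact ⟨Φ, hks, hmem⟩
  | succ n hn ih =>
      obtain ⟨Φ', hks', hmem'⟩ := ih (fun s hs hs' => hnoinfo s hs (hs'.trans (Nat.lt_succ_self n)))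
      exact step_preserve (e.step n) y z Φ' hks' hmem'
        (hnoinfo n hn (Nat.lt_succ_self n))

end DRL
end

section
/- Let x = (x,A,B) be a refob and t1, t2 times such that x has not yet been deactivated at t1 and not yet been released at t2. Suppose A's knowledge set at t1 entails SentCount(x,n), B's knowledge set at t2 entails RecvCount(x,m), and if t1 < t2 then A sends no messages along x during the interval [t1, t2]. Then max(n - m, 0) equals the number of messages sent along x before t1 that were not received before t2. -/
namespace DRL

/-! ### Auxiliary development for `stmt2` -/

section Stmt2Aux

open scoped Classical

/-- Messages travelling along the refob `x` (application and info messages). -/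
def AlongX (x : Refob) : Message → Prop
  | .app y _ => y = x
  | .info y _ => y = x
  | .rel _ _ => False

/-- Number of in-flight messages along `x` (they live in `x.target`'s mailbox). -/
noncomputable def inflightK (x : Refob) (k : Config) : ℕ :=
  (Multiset.filter (AlongX x) (k.msgs x.target)).card

def SentOK (x : Refob) (k : Config) (N : ℕ) : Prop :=
  (k.ks x.owner = none → N = 0) ∧
  ∀ Φ, k.ks x.owner = some Φ →
    (∀ j, Fact.sentCount x j ∈ Φ → j = N) ∧ (N ≠ 0 → Fact.sentCount x N ∈ Φ)

def RecvOK (x : Refob) (k : Config) (N : ℕ) : Prop :=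
  (k.ks x.target = none → N = 0) ∧
  ∀ Φ, k.ks x.target = some Φ →
    (∀ j, Fact.recvCount x j ∈ Φ → j = N) ∧ (N ≠ 0 → Fact.recvCount x N ∈ Φ)

def NoRel (x : Refob) (k : Config) : Prop :=
  ∀ C Φ, k.ks C = some Φ → Fact.released x ∉ Φ

def MsgLocal (x : Refob) (k : Config) : Prop :=
  ∀ C, C ≠ x.target → ∀ m ∈ k.msgs C, ¬ AlongX x m

/-! #### counting lemmas -/

lemma ncard_lt_succ (P : ℕ → Prop) (t : ℕ) :
    {s | s < t + 1 ∧ P s}.ncard =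
      {s | s < t ∧ P s}.ncard + (if P t then 1 else 0) := by
  classical
  have h : ∀ u : ℕ, {s | s < u ∧ P s} = ↑((Finset.range u).filter fun s => P s) := by
    intro u; ext s; simp
  rw [h, h, Set.ncard_coe_finset, Set.ncard_coe_finset, Finset.range_add_one,
    Finset.filter_insert]
  split
  · rw [Finset.card_insert_of_notMem (by simp)]
  · simp

lemma sentCt_succ (e : Exec) (x : Refob) (t : ℕ) :
    e.sentCt x (t + 1) = e.sentCt x t + (if (e.ev t).sendsAlong x then 1 else 0) :=
  ncard_lt_succ _ t

lemma recvCt_succ (e : Exec) (x : Refob) (t : ℕ) :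
    e.recvCt x (t + 1) = e.recvCt x t + (if (e.ev t).receivesAlong x then 1 else 0) :=
  ncard_lt_succ _ t

lemma sentCt_zero (e : Exec) (x : Refob) : e.sentCt x 0 = 0 := by
  have : {s | s < 0 ∧ (e.ev s).sendsAlong x} = ∅ := by ext s; simp
  simp [Exec.sentCt, this]

lemma recvCt_zero (e : Exec) (x : Refob) : e.recvCt x 0 = 0 := by
  have : {s | s < 0 ∧ (e.ev s).receivesAlong x} = ∅ := by ext s; simp
  simp [Exec.recvCt, this]

lemma sentCt_mono (e : Exec) (x : Refob) {s t : ℕ} (h : s ≤ t) :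
    e.sentCt x s ≤ e.sentCt x t := by
  induction t, h using Nat.le_induction with
  | base => exact le_refl _
  | succ t ht ih => rw [sentCt_succ]; omega

/-! #### `ks`/`msgs` computation lemmas -/

lemma ks_setActor (k : Config) (A : ℕ) (s : Status) (Φ : Set Fact) (C : ℕ) :
    (k.setActor A s Φ).ks C = if C = A then some Φ else k.ks C := by
  simp only [Config.ks, Config.setActor, Function.update_apply]
  split <;> rfl

lemma msgs_setActor (k : Config) (A : ℕ) (s : Status) (Φ : Set Fact) :
    (k.setActor A s Φ).msgs = k.msgs := rfl

lemma ks_pushMsg (k : Config) (B : ℕ) (m : Message) (C : ℕ) :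
    (k.pushMsg B m).ks C = k.ks C := rfl

lemma msgs_pushMsg (k : Config) (B : ℕ) (m : Message) (C : ℕ) :
    (k.pushMsg B m).msgs C = if C = B then m ::ₘ k.msgs B else k.msgs C := by
  simp only [Config.pushMsg, Function.update_apply]

/-! #### membership in `IncSent`/`IncRecv` -/

lemma mem_IncSent_of_ne {y : Refob} {Φ : Set Fact} {φ : Fact}
    (h : ∀ n, φ ≠ Fact.sentCount y n) : φ ∈ IncSent y Φ ↔ φ ∈ Φ := by
  simp only [IncSent, Set.mem_union, Set.mem_setOf_eq, Set.mem_image]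
  constructor
  · rintro (⟨h1, _⟩ | ⟨i, _, hi⟩)
    · exact h1
    · exact absurd hi.symm (h _)
  · exact fun hφ => Or.inl ⟨hφ, h⟩

lemma mem_IncRecv_of_ne {y : Refob} {Φ : Set Fact} {φ : Fact}
    (h : ∀ n, φ ≠ Fact.recvCount y n) : φ ∈ IncRecv y Φ ↔ φ ∈ Φ := by
  simp only [IncRecv, Set.mem_union, Set.mem_setOf_eq, Set.mem_image]
  constructor
  · rintro (⟨h1, _⟩ | ⟨i, _, hi⟩)
    · exact h1
    · exact absurd hi.symm (h _)
  · exact fun hφ => Or.inl ⟨hφ, h⟩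

lemma IncSent_OK {x : Refob} {Φ : Set Fact} {N : ℕ}
    (h1 : ∀ j, Fact.sentCount x j ∈ Φ → j = N)
    (h2 : N ≠ 0 → Fact.sentCount x N ∈ Φ) :
    (∀ j, Fact.sentCount x j ∈ IncSent x Φ → j = N + 1) ∧
      Fact.sentCount x (N + 1) ∈ IncSent x Φ := by
  constructor
  · intro j hj
    simp only [IncSent, Set.mem_union, Set.mem_setOf_eq, Set.mem_image] at hj
    rcases hj with ⟨_, hne⟩ | ⟨i, hi, hij⟩
    · exact absurd rfl (hne j)
    · obtain ⟨-, rfl⟩ : x = x ∧ j = i + 1 := by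
        constructor
        · rfl
        · exact (Fact.sentCount.injEq _ _ _ _ ▸ hij).2.symm ▸ rfl
      rcases hi with hi | ⟨rfl, hnone⟩
      · rw [h1 i hi]
      · have : N = 0 := by by_contra hN; exact hnone N (h2 hN)
        rw [this]
  · simp only [IncSent, Set.mem_union, Set.mem_setOf_eq, Set.mem_image]
    right
    refine ⟨N, ?_, rfl⟩
    by_cases hN : N = 0
    · subst hN
      by_cases h0 : Fact.sentCount x 0 ∈ Φ
      · exact Or.inl h0
      · refine Or.inr ⟨rfl, fun m hm => ?_⟩
        exact h0 ((h1 m hm) ▸ hm)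
    · exact Or.inl (h2 hN)

lemma IncRecv_OK {x : Refob} {Φ : Set Fact} {N : ℕ}
    (h1 : ∀ j, Fact.recvCount x j ∈ Φ → j = N)
    (h2 : N ≠ 0 → Fact.recvCount x N ∈ Φ) :
    (∀ j, Fact.recvCount x j ∈ IncRecv x Φ → j = N + 1) ∧
      Fact.recvCount x (N + 1) ∈ IncRecv x Φ := by
  constructor
  · intro j hj
    simp only [IncRecv, Set.mem_union, Set.mem_setOf_eq, Set.mem_image] at hj
    rcases hj with ⟨_, hne⟩ | ⟨i, hi, hij⟩
    · exact absurd rfl (hne j)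
    · obtain ⟨-, rfl⟩ : x = x ∧ j = i + 1 := by
        constructor
        · rfl
        · exact (Fact.recvCount.injEq _ _ _ _ ▸ hij).2.symm ▸ rfl
      rcases hi with hi | ⟨rfl, hnone⟩
      · rw [h1 i hi]
      · have : N = 0 := by by_contra hN; exact hnone N (h2 hN)
        rw [this]
  · simp only [IncRecv, Set.mem_union, Set.mem_setOf_eq, Set.mem_image]
    right
    refine ⟨N, ?_, rfl⟩
    by_cases hN : N = 0
    · subst hN
      by_cases h0 : Fact.recvCount x 0 ∈ Φ
      · exact Or.inl h0
      · exact Or.inr ⟨rfl, fun m hm => h0 ((h1 m hm) ▸ hm)⟩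
    · exact Or.inl (h2 hN)

end Stmt2Aux


section Stmt2Aux2

lemma step_actors_mono {k k' : Config} {ev : Event} (h : Step k ev k') {C : ℕ}
    (hC : k.actors C ≠ none) : k'.actors C ≠ none := by
  cases h <;>
    first
      | exact hC
      | (simp_all only [Config.setActor, Config.pushMsg, Function.update_apply, ne_eq] <;>
          split <;> simp_all <;> split <;> simp_all)

lemma step_ext_mono {k k' : Config} {ev : Event} (h : Step k ev k') {C : ℕ}
    (hC : C ∈ k.ext) : C ∈ k'.ext := by
  cases h <;> first
    | exact hC
    | exact Or.inl hC

lemma update_disj' {α : Type*} {E : Set ℕ} {f : ℕ → Option α}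
    (hd : ∀ C, f C ≠ none → C ∉ E) {A : ℕ} {v : Option α} (hA : A ∉ E) :
    ∀ C, Function.update f A v C ≠ none → C ∉ E := by
  intro C hC
  by_cases h : C = A
  · subst h; exact hA
  · rw [Function.update_apply, if_neg h] at hC
    exact hd C hC

lemma step_ext_disjoint {k k' : Config} {ev : Event} (h : Step k ev k')
    (hd : ∀ C, k.actors C ≠ none → C ∉ k.ext) :
    ∀ C, k'.actors C ≠ none → C ∉ k'.ext := by
  intro C hC
  cases h
  case spawn h1 h2 h3 h4 h5 =>
    exact update_disj' (update_disj' hd (hd _ (by simp [h1]))) h2.2 C hC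
  case send h1 h2 h3 h4 h5 h6 =>
    exact update_disj' hd (hd _ (by simp [h1])) C hC
  case receive h1 h2 h3 =>
    exact update_disj' hd (hd _ (by simp [h1])) C hC
  case idle h1 =>
    exact update_disj' hd (hd _ (by simp [h1])) C hC
  case sendInfo h1 h2 h3 h4 =>
    exact update_disj' hd (hd _ (by simp [h1])) C hC
  case info h1 h2 h3 =>
    exact update_disj' hd (hd _ (by simp [h1])) C hC
  case sendRelease h1 h2 h3 h4 h5 =>
    exact update_disj' hd (hd _ (by simp [h1])) C hC
  case release h1 h2 h3 h4 =>
    exact update_disj' hd (hd _ (by simp [h1])) C hC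
  case compaction h1 h2 h3 h4 =>
    exact update_disj' hd (hd _ (by simp [h1])) C hC
  case snapshot h1 => exact hd C hC
  case inp h1 h2 h3 h4 h5 =>
    intro hmem
    rcases hmem with hmem | hmem
    · exact hd _ hC hmem
    · obtain ⟨r, _, rfl, hnone⟩ := hmem
      exact hC hnone
  case out h1 h2 h3 => exact hd C hC
  case releaseOut h1 h2 => exact hd C hC
  case infoOut h1 h2 => exact hd C hC

lemma exec_ext_disjoint (e : Exec) (t : ℕ) :
    ∀ C, (e.cfg t).actors C ≠ none → C ∉ (e.cfg t).ext := by
  induction t with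
  | zero =>
    obtain ⟨A, E, x0, y0, hAE, _, hact, _, _, hext⟩ := e.init
    intro C hC hCe
    rw [hext] at hCe
    rw [hact, Function.update_apply] at hC
    rcases Set.mem_singleton_iff.mp hCe with rfl
    split at hC
    · exact hAE ‹C = A›.symm
    · exact hC rfl
  | succ t ih => exact step_ext_disjoint (e.step t) ih

lemma exec_actors_mono (e : Exec) {s t : ℕ} (h : s ≤ t) {C : ℕ}
    (hC : (e.cfg s).actors C ≠ none) : (e.cfg t).actors C ≠ none := by
  induction t, h using Nat.le_induction with
  | base => exact hC
  | succ t ht ih => exact step_actors_mono (e.step t) ih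

lemma exec_ext_mono (e : Exec) {s t : ℕ} (h : s ≤ t) {C : ℕ}
    (hC : C ∈ (e.cfg s).ext) : C ∈ (e.cfg t).ext := by
  induction t, h using Nat.le_induction with
  | base => exact hC
  | succ t ht ih => exact step_ext_mono (e.step t) ih

/-- If an actor is internal at some time, it is never external. -/
lemma never_ext (e : Exec) {T : ℕ} {C : ℕ} (hC : (e.cfg T).actors C ≠ none) :
    ∀ t, C ∉ (e.cfg t).ext := by
  intro t hmem
  rcases le_total t T with h | h
  · exact exec_ext_disjoint e T C hC (exec_ext_mono e h hmem)
  · exact exec_ext_disjoint e t C (exec_actors_mono e h hC) hmem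

end Stmt2Aux2


section Stmt2Aux3

open scoped Classical

lemma SentOK_congr {x : Refob} {N : ℕ} {k k' : Config}
    (hOK : SentOK x k N)
    (hnone : k'.ks x.owner = none → k.ks x.owner = none)
    (hsome : ∀ Φ', k'.ks x.owner = some Φ' →
      (k.ks x.owner = none ∧ ∀ j, Fact.sentCount x j ∉ Φ') ∨
      (∃ Φ, k.ks x.owner = some Φ ∧
        ∀ j, (Fact.sentCount x j ∈ Φ' ↔ Fact.sentCount x j ∈ Φ))) :
    SentOK x k' N := by
  refine ⟨fun h => hOK.1 (hnone h), fun Φ' h => ?_⟩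
  rcases hsome Φ' h with ⟨hn, hno⟩ | ⟨Φ, hΦ, hiff⟩
  · exact ⟨fun j hj => absurd hj (hno j), fun h0 => absurd (hOK.1 hn) h0⟩
  · obtain ⟨m1, m2⟩ := hOK.2 Φ hΦ
    exact ⟨fun j hj => m1 j ((hiff j).mp hj), fun h0 => (hiff N).mpr (m2 h0)⟩

lemma RecvOK_congr {x : Refob} {N : ℕ} {k k' : Config}
    (hOK : RecvOK x k N)
    (hnone : k'.ks x.target = none → k.ks x.target = none)
    (hsome : ∀ Φ', k'.ks x.target = some Φ' →
      (k.ks x.target = none ∧ ∀ j, Fact.recvCount x j ∉ Φ') ∨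
      (∃ Φ, k.ks x.target = some Φ ∧
        ∀ j, (Fact.recvCount x j ∈ Φ' ↔ Fact.recvCount x j ∈ Φ))) :
    RecvOK x k' N := by
  refine ⟨fun h => hOK.1 (hnone h), fun Φ' h => ?_⟩
  rcases hsome Φ' h with ⟨hn, hno⟩ | ⟨Φ, hΦ, hiff⟩
  · exact ⟨fun j hj => absurd hj (hno j), fun h0 => absurd (hOK.1 hn) h0⟩
  · obtain ⟨m1, m2⟩ := hOK.2 Φ hΦ
    exact ⟨fun j hj => m1 j ((hiff j).mp hj), fun h0 => (hiff N).mpr (m2 h0)⟩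

lemma ks_eq_of_actors {k : Config} {A : ℕ} {s : Status} {Φ : Set Fact}
    (h : k.actors A = some (s, Φ)) : k.ks A = some Φ := by
  simp [Config.ks, h]

lemma ks_withMsgs (c : Config) (M : ℕ → Multiset Message) (C : ℕ) :
    (Config.mk c.actors M c.recep c.ext).ks C = c.ks C := rfl

lemma msgs_withMsgs (c : Config) (M : ℕ → Multiset Message) :
    (Config.mk c.actors M c.recep c.ext).msgs = M := rfl

lemma step_sent {k k' : Config} {ev : Event} {x : Refob} {N : ℕ}
    (h : Step k ev k') (hnd : ¬ ev.deactivates x) (hOK : SentOK x k N) :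
    SentOK x k' (N + if ev.sendsAlong x then 1 else 0) := by
  classical
  cases h
  case spawn Φ x0 y0 A B h1 h2 h3 h4 h5 =>
    rw [if_neg (by simp [Event.sendsAlong]), Nat.add_zero]
    refine SentOK_congr hOK ?_ ?_
    · intro hyp
      rw [ks_setActor, ks_setActor] at hyp
      split at hyp
      · simp at hyp
      · split at hyp
        · simp at hyp
        · exact hyp
    · intro Φ' hyp
      rw [ks_setActor, ks_setActor] at hyp
      split at hyp
      · rename_i hB
        obtain rfl := Option.some.inj hyp
        refine Or.inl ⟨?_, fun j => by simp⟩
        rw [hB]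
        simp [Config.ks, h2.1]
      · split at hyp
        · rename_i hA
          obtain rfl := Option.some.inj hyp
          exact Or.inr ⟨Φ, by rw [hA]; exact ks_eq_of_actors h1, fun j => by simp⟩
        · exact Or.inr ⟨Φ', hyp, fun j => Iff.rfl⟩
  case send Φ x' l A B h1 h2 h3 h4 h5 h6 =>
    by_cases hx : x = x'
    · subst hx
      rw [if_pos (by simp [Event.sendsAlong])]
      have hks : k.ks x.owner = some Φ := by rw [h2]; exact ks_eq_of_actors h1
      obtain ⟨m1, m2⟩ := hOK.2 Φ hks
      obtain ⟨i1, i2⟩ := IncSent_OK m1 m2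
      constructor
      · intro hnone
        rw [ks_pushMsg, ks_setActor, if_pos h2] at hnone
        simp at hnone
      · intro Φ' hΦ'
        rw [ks_pushMsg, ks_setActor, if_pos h2] at hΦ'
        obtain rfl := Option.some.inj hΦ'
        constructor
        · intro j hj
          rw [Set.mem_union] at hj
          rcases hj with hj | hj
          · exact i1 j hj
          · obtain ⟨p, _, hp⟩ := hj; simp at hp
        · intro _
          exact Set.mem_union_left _ i2
    · rw [if_neg (by simp [Event.sendsAlong, hx]), Nat.add_zero]
      refine SentOK_congr hOK ?_ ?_
      · intro hyp
        rw [ks_pushMsg, ks_setActor] at hyp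
        split at hyp
        · simp at hyp
        · exact hyp
      · intro Φ' hyp
        rw [ks_pushMsg, ks_setActor] at hyp
        split at hyp
        · rename_i hA
          obtain rfl := Option.some.inj hyp
          refine Or.inr ⟨Φ, by rw [hA]; exact ks_eq_of_actors h1, fun j => ?_⟩
          rw [Set.mem_union, mem_IncSent_of_ne (by simp [hx])]
          constructor
          · rintro (hj | hj)
            · exact hj
            · obtain ⟨p, _, hp⟩ := hj; simp at hp
          · exact Or.inl
        · exact Or.inr ⟨Φ', hyp, fun j => Iff.rfl⟩
  case receive Φ μ x' B R h1 h2 h3 =>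
    rw [if_neg (by simp [Event.sendsAlong]), Nat.add_zero]
    refine SentOK_congr hOK ?_ ?_
    · intro hyp
      rw [ks_withMsgs, ks_setActor] at hyp
      split at hyp
      · simp at hyp
      · exact hyp
    · intro Φ' hyp
      rw [ks_withMsgs, ks_setActor] at hyp
      split at hyp
      · rename_i hB
        obtain rfl := Option.some.inj hyp
        refine Or.inr ⟨Φ, by rw [hB]; exact ks_eq_of_actors h1, fun j => ?_⟩
        rw [Set.mem_union, mem_IncRecv_of_ne (by simp)]
        constructor
        · rintro (hj | hj)
          · exact hj
          · obtain ⟨r, _, hr⟩ := hj; simp at hr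
        · exact Or.inl
      · exact Or.inr ⟨Φ', hyp, fun j => Iff.rfl⟩
  case idle Φ A h1 =>
    rw [if_neg (by simp [Event.sendsAlong]), Nat.add_zero]
    refine SentOK_congr hOK ?_ ?_
    · intro hyp
      rw [ks_setActor] at hyp
      split at hyp
      · simp at hyp
      · exact hyp
    · intro Φ' hyp
      rw [ks_setActor] at hyp
      split at hyp
      · rename_i hA
        obtain rfl := Option.some.inj hyp
        exact Or.inr ⟨Φ, by rw [hA]; exact ks_eq_of_actors h1, fun j => Iff.rfl⟩
      · exact Or.inr ⟨Φ', hyp, fun j => Iff.rfl⟩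
  case sendInfo Φ y z A h1 h2 h3 h4 =>
    by_cases hx : x = y
    · subst hx
      rw [if_pos (by simp [Event.sendsAlong])]
      have hks : k.ks x.owner = some Φ := by rw [h2]; exact ks_eq_of_actors h1
      obtain ⟨m1, m2⟩ := hOK.2 Φ hks
      have m1' : ∀ j, Fact.sentCount x j ∈ Φ \ {Fact.createdUsing x z} → j = N :=
        fun j hj => m1 j hj.1
      have m2' : N ≠ 0 → Fact.sentCount x N ∈ Φ \ {Fact.createdUsing x z} :=
        fun h0 => ⟨m2 h0, by simp⟩
      obtain ⟨i1, i2⟩ := IncSent_OK m1' m2'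
      constructor
      · intro hnone
        rw [ks_pushMsg, ks_setActor, if_pos h2] at hnone
        simp at hnone
      · intro Φ' hΦ'
        rw [ks_pushMsg, ks_setActor, if_pos h2] at hΦ'
        obtain rfl := Option.some.inj hΦ'
        exact ⟨i1, fun _ => i2⟩
    · rw [if_neg (by simp [Event.sendsAlong, hx]), Nat.add_zero]
      refine SentOK_congr hOK ?_ ?_
      · intro hyp
        rw [ks_pushMsg, ks_setActor] at hyp
        split at hyp
        · simp at hyp
        · exact hyp
      · intro Φ' hyp
        rw [ks_pushMsg, ks_setActor] at hyp
        split at hyp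
        · rename_i hA
          obtain rfl := Option.some.inj hyp
          refine Or.inr ⟨Φ, by rw [hA]; exact ks_eq_of_actors h1, fun j => ?_⟩
          rw [mem_IncSent_of_ne (by simp [hx])]
          simp
        · exact Or.inr ⟨Φ', hyp, fun j => Iff.rfl⟩
  case info Φ μ y z C h1 h2 h3 =>
    rw [if_neg (by simp [Event.sendsAlong]), Nat.add_zero]
    refine SentOK_congr hOK ?_ ?_
    · intro hyp
      rw [ks_withMsgs, ks_setActor] at hyp
      split at hyp
      · simp at hyp
      · exact hyp
    · intro Φ' hyp
      rw [ks_withMsgs, ks_setActor] at hyp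
      split at hyp
      · rename_i hC
        obtain rfl := Option.some.inj hyp
        refine Or.inr ⟨Φ, by rw [hC]; exact ks_eq_of_actors h1, fun j => ?_⟩
        rw [Set.mem_union, mem_IncRecv_of_ne (by simp)]
        simp
      · exact Or.inr ⟨Φ', hyp, fun j => Iff.rfl⟩
  case sendRelease Φ x' n A h1 h2 h3 h4 h5 =>
    have hx : x ≠ x' := fun hxx => hnd (by simp [Event.deactivates, hxx])
    rw [if_neg (by simp [Event.sendsAlong]), Nat.add_zero]
    refine SentOK_congr hOK ?_ ?_
    · intro hyp
      rw [ks_pushMsg, ks_setActor] at hyp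
      split at hyp
      · simp at hyp
      · exact hyp
    · intro Φ' hyp
      rw [ks_pushMsg, ks_setActor] at hyp
      split at hyp
      · rename_i hA
        obtain rfl := Option.some.inj hyp
        refine Or.inr ⟨Φ, by rw [hA]; exact ks_eq_of_actors h1, fun j => ?_⟩
        simp [Set.mem_setOf_eq, hx]
      · exact Or.inr ⟨Φ', hyp, fun j => Iff.rfl⟩
  case release Φ μ x' n B h1 h2 h3 h4 =>
    rw [if_neg (by simp [Event.sendsAlong]), Nat.add_zero]
    refine SentOK_congr hOK ?_ ?_
    · intro hyp
      rw [ks_withMsgs, ks_setActor] at hyp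
      split at hyp
      · simp at hyp
      · exact hyp
    · intro Φ' hyp
      rw [ks_withMsgs, ks_setActor] at hyp
      split at hyp
      · rename_i hB
        obtain rfl := Option.some.inj hyp
        refine Or.inr ⟨Φ, by rw [hB]; exact ks_eq_of_actors h1, fun j => ?_⟩
        simp
      · exact Or.inr ⟨Φ', hyp, fun j => Iff.rfl⟩
  case compaction Φ x' C h1 h2 h3 h4 =>
    rw [if_neg (by simp [Event.sendsAlong]), Nat.add_zero]
    refine SentOK_congr hOK ?_ ?_
    · intro hyp
      rw [ks_setActor] at hyp
      split at hyp
      · simp at hyp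
      · exact hyp
    · intro Φ' hyp
      rw [ks_setActor] at hyp
      split at hyp
      · rename_i hC
        obtain rfl := Option.some.inj hyp
        refine Or.inr ⟨Φ, by rw [hC]; exact ks_eq_of_actors h1, fun j => ?_⟩
        simp [Set.mem_setOf_eq]
      · exact Or.inr ⟨Φ', hyp, fun j => Iff.rfl⟩
  case snapshot Φ A h1 =>
    rw [if_neg (by simp [Event.sendsAlong]), Nat.add_zero]
    exact hOK
  case inp x' A R h1 h2 h3 h4 h5 =>
    rw [if_neg (by simp [Event.sendsAlong]), Nat.add_zero]
    exact hOK
  case out μ x' B R h1 h2 h3 =>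
    rw [if_neg (by simp [Event.sendsAlong]), Nat.add_zero]
    exact hOK
  case releaseOut μ x' n B h1 h2 =>
    rw [if_neg (by simp [Event.sendsAlong]), Nat.add_zero]
    exact hOK
  case infoOut μ y z C h1 h2 =>
    rw [if_neg (by simp [Event.sendsAlong]), Nat.add_zero]
    exact hOK

end Stmt2Aux3

section Stmt2Aux4

open scoped Classical

lemma step_norel {k k' : Config} {ev : Event} {x : Refob}
    (h : Step k ev k') (hnr : ¬ ev.releases x) (hNR : NoRel x k) : NoRel x k' := by
  classical
  intro C Φ' hΦ'
  cases h
  case spawn Φ x0 y0 A B h1 h2 h3 h4 h5 =>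
    rw [ks_setActor, ks_setActor] at hΦ'
    split at hΦ'
    · obtain rfl := Option.some.inj hΦ'
      simp
    · split at hΦ'
      · obtain rfl := Option.some.inj hΦ'
        rename_i hA _
        intro hmem
        rcases hmem with hmem | hmem
        · exact hNR _ _ (ks_eq_of_actors h1) hmem
        · simp at hmem
      · exact hNR _ _ hΦ'
  case send Φ x' l A B h1 h2 h3 h4 h5 h6 =>
    rw [ks_pushMsg, ks_setActor] at hΦ'
    split at hΦ'
    · obtain rfl := Option.some.inj hΦ'
      intro hmem
      rw [Set.mem_union, mem_IncSent_of_ne (by simp)] at hmem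
      rcases hmem with hmem | hmem
      · exact hNR _ _ (ks_eq_of_actors h1) hmem
      · obtain ⟨p, _, hp⟩ := hmem; simp at hp
    · exact hNR _ _ hΦ'
  case receive Φ μ x' B R h1 h2 h3 =>
    rw [ks_withMsgs, ks_setActor] at hΦ'
    split at hΦ'
    · obtain rfl := Option.some.inj hΦ'
      intro hmem
      rw [Set.mem_union, mem_IncRecv_of_ne (by simp)] at hmem
      rcases hmem with hmem | hmem
      · exact hNR _ _ (ks_eq_of_actors h1) hmem
      · obtain ⟨r, _, hr⟩ := hmem; simp at hr
    · exact hNR _ _ hΦ'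
  case idle Φ A h1 =>
    rw [ks_setActor] at hΦ'
    split at hΦ'
    · obtain rfl := Option.some.inj hΦ'
      exact hNR _ _ (ks_eq_of_actors h1)
    · exact hNR _ _ hΦ'
  case sendInfo Φ y z A h1 h2 h3 h4 =>
    rw [ks_pushMsg, ks_setActor] at hΦ'
    split at hΦ'
    · obtain rfl := Option.some.inj hΦ'
      intro hmem
      rw [mem_IncSent_of_ne (by simp)] at hmem
      exact hNR _ _ (ks_eq_of_actors h1) hmem.1
    · exact hNR _ _ hΦ'
  case info Φ μ y z C0 h1 h2 h3 =>
    rw [ks_withMsgs, ks_setActor] at hΦ'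
    split at hΦ'
    · obtain rfl := Option.some.inj hΦ'
      intro hmem
      rw [Set.mem_union, mem_IncRecv_of_ne (by simp)] at hmem
      rcases hmem with hmem | hmem
      · exact hNR _ _ (ks_eq_of_actors h1) hmem
      · simp at hmem
    · exact hNR _ _ hΦ'
  case sendRelease Φ x' n A h1 h2 h3 h4 h5 =>
    rw [ks_pushMsg, ks_setActor] at hΦ'
    split at hΦ'
    · obtain rfl := Option.some.inj hΦ'
      intro hmem
      exact hNR _ _ (ks_eq_of_actors h1) hmem.1
    · exact hNR _ _ hΦ'
  case release Φ μ x' n B h1 h2 h3 h4 =>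
    have hx : x ≠ x' := fun hxx => hnr (by simp [Event.releases, hxx])
    rw [ks_withMsgs, ks_setActor] at hΦ'
    split at hΦ'
    · obtain rfl := Option.some.inj hΦ'
      intro hmem
      rcases hmem with hmem | hmem
      · exact hNR _ _ (ks_eq_of_actors h1) hmem
      · exact hx (by simpa using hmem)
    · exact hNR _ _ hΦ'
  case compaction Φ x' C0 h1 h2 h3 h4 =>
    rw [ks_setActor] at hΦ'
    split at hΦ'
    · obtain rfl := Option.some.inj hΦ'
      intro hmem
      exact hNR _ _ (ks_eq_of_actors h1) hmem.1
    · exact hNR _ _ hΦ'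
  case snapshot Φ A h1 => exact hNR _ _ hΦ'
  case inp x' A R h1 h2 h3 h4 h5 => exact hNR _ _ hΦ'
  case out μ x' B R h1 h2 h3 => exact hNR _ _ hΦ'
  case releaseOut μ x' n B h1 h2 => exact hNR _ _ hΦ'
  case infoOut μ y z C0 h1 h2 => exact hNR _ _ hΦ'

lemma step_recv {k k' : Config} {ev : Event} {x : Refob} {N : ℕ}
    (h : Step k ev k') (hnr : ¬ ev.releases x) (hOK : RecvOK x k N)
    (hNR : NoRel x k) :
    RecvOK x k' (N + if ev.receivesAlong x then 1 else 0) := by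
  classical
  cases h
  case spawn Φ x0 y0 A B h1 h2 h3 h4 h5 =>
    rw [if_neg (by simp [Event.receivesAlong]), Nat.add_zero]
    refine RecvOK_congr hOK ?_ ?_
    · intro hyp
      rw [ks_setActor, ks_setActor] at hyp
      split at hyp
      · simp at hyp
      · split at hyp
        · simp at hyp
        · exact hyp
    · intro Φ' hyp
      rw [ks_setActor, ks_setActor] at hyp
      split at hyp
      · rename_i hB
        obtain rfl := Option.some.inj hyp
        refine Or.inl ⟨?_, fun j => by simp⟩
        rw [hB]
        simp [Config.ks, h2.1]
      · split at hyp
        · rename_i hA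
          obtain rfl := Option.some.inj hyp
          exact Or.inr ⟨Φ, by rw [hA]; exact ks_eq_of_actors h1, fun j => by simp⟩
        · exact Or.inr ⟨Φ', hyp, fun j => Iff.rfl⟩
  case send Φ x' l A B h1 h2 h3 h4 h5 h6 =>
    rw [if_neg (by simp [Event.receivesAlong]), Nat.add_zero]
    refine RecvOK_congr hOK ?_ ?_
    · intro hyp
      rw [ks_pushMsg, ks_setActor] at hyp
      split at hyp
      · simp at hyp
      · exact hyp
    · intro Φ' hyp
      rw [ks_pushMsg, ks_setActor] at hyp
      split at hyp
      · rename_i hA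
        obtain rfl := Option.some.inj hyp
        refine Or.inr ⟨Φ, by rw [hA]; exact ks_eq_of_actors h1, fun j => ?_⟩
        rw [Set.mem_union, mem_IncSent_of_ne (by simp)]
        constructor
        · rintro (hj | hj)
          · exact hj
          · obtain ⟨p, _, hp⟩ := hj; simp at hp
        · exact Or.inl
      · exact Or.inr ⟨Φ', hyp, fun j => Iff.rfl⟩
  case receive Φ μ x' B R h1 h2 h3 =>
    by_cases hx : x = x'
    · subst hx
      rw [if_pos (by simp [Event.receivesAlong])]
      have hks : k.ks x.target = some Φ := by rw [h2]; exact ks_eq_of_actors h1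
      obtain ⟨m1, m2⟩ := hOK.2 Φ hks
      obtain ⟨i1, i2⟩ := IncRecv_OK m1 m2
      constructor
      · intro hnone
        rw [ks_withMsgs, ks_setActor, if_pos h2] at hnone
        simp at hnone
      · intro Φ' hΦ'
        rw [ks_withMsgs, ks_setActor, if_pos h2] at hΦ'
        obtain rfl := Option.some.inj hΦ'
        constructor
        · intro j hj
          rw [Set.mem_union] at hj
          rcases hj with hj | hj
          · exact i1 j hj
          · obtain ⟨r, _, hr⟩ := hj; simp at hr
        · intro _
          exact Set.mem_union_left _ i2
    · rw [if_neg (by simp [Event.receivesAlong, hx]), Nat.add_zero]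
      refine RecvOK_congr hOK ?_ ?_
      · intro hyp
        rw [ks_withMsgs, ks_setActor] at hyp
        split at hyp
        · simp at hyp
        · exact hyp
      · intro Φ' hyp
        rw [ks_withMsgs, ks_setActor] at hyp
        split at hyp
        · rename_i hB
          obtain rfl := Option.some.inj hyp
          refine Or.inr ⟨Φ, by rw [hB]; exact ks_eq_of_actors h1, fun j => ?_⟩
          rw [Set.mem_union, mem_IncRecv_of_ne (by simp [hx])]
          constructor
          · rintro (hj | hj)
            · exact hj
            · obtain ⟨r, _, hr⟩ := hj; simp at hr
          · exact Or.inl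
        · exact Or.inr ⟨Φ', hyp, fun j => Iff.rfl⟩
  case idle Φ A h1 =>
    rw [if_neg (by simp [Event.receivesAlong]), Nat.add_zero]
    refine RecvOK_congr hOK ?_ ?_
    · intro hyp
      rw [ks_setActor] at hyp
      split at hyp
      · simp at hyp
      · exact hyp
    · intro Φ' hyp
      rw [ks_setActor] at hyp
      split at hyp
      · rename_i hA
        obtain rfl := Option.some.inj hyp
        exact Or.inr ⟨Φ, by rw [hA]; exact ks_eq_of_actors h1, fun j => Iff.rfl⟩
      · exact Or.inr ⟨Φ', hyp, fun j => Iff.rfl⟩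
  case sendInfo Φ y z A h1 h2 h3 h4 =>
    rw [if_neg (by simp [Event.receivesAlong]), Nat.add_zero]
    refine RecvOK_congr hOK ?_ ?_
    · intro hyp
      rw [ks_pushMsg, ks_setActor] at hyp
      split at hyp
      · simp at hyp
      · exact hyp
    · intro Φ' hyp
      rw [ks_pushMsg, ks_setActor] at hyp
      split at hyp
      · rename_i hA
        obtain rfl := Option.some.inj hyp
        refine Or.inr ⟨Φ, by rw [hA]; exact ks_eq_of_actors h1, fun j => ?_⟩
        rw [mem_IncSent_of_ne (by simp)]
        simp
      · exact Or.inr ⟨Φ', hyp, fun j => Iff.rfl⟩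
  case info Φ μ y z C h1 h2 h3 =>
    by_cases hx : x = y
    · subst hx
      rw [if_pos (by simp [Event.receivesAlong])]
      have hks : k.ks x.target = some Φ := by rw [h2]; exact ks_eq_of_actors h1
      obtain ⟨m1, m2⟩ := hOK.2 Φ hks
      obtain ⟨i1, i2⟩ := IncRecv_OK m1 m2
      constructor
      · intro hnone
        rw [ks_withMsgs, ks_setActor, if_pos h2] at hnone
        simp at hnone
      · intro Φ' hΦ'
        rw [ks_withMsgs, ks_setActor, if_pos h2] at hΦ'
        obtain rfl := Option.some.inj hΦ'
        constructor
        · intro j hj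
          rw [Set.mem_union] at hj
          rcases hj with hj | hj
          · exact i1 j hj
          · simp at hj
        · intro _
          exact Set.mem_union_left _ i2
    · rw [if_neg (by simp [Event.receivesAlong, hx]), Nat.add_zero]
      refine RecvOK_congr hOK ?_ ?_
      · intro hyp
        rw [ks_withMsgs, ks_setActor] at hyp
        split at hyp
        · simp at hyp
        · exact hyp
      · intro Φ' hyp
        rw [ks_withMsgs, ks_setActor] at hyp
        split at hyp
        · rename_i hC
          obtain rfl := Option.some.inj hyp
          refine Or.inr ⟨Φ, by rw [hC]; exact ks_eq_of_actors h1, fun j => ?_⟩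
          rw [Set.mem_union, mem_IncRecv_of_ne (by simp [hx])]
          simp
        · exact Or.inr ⟨Φ', hyp, fun j => Iff.rfl⟩
  case sendRelease Φ x' n A h1 h2 h3 h4 h5 =>
    rw [if_neg (by simp [Event.receivesAlong]), Nat.add_zero]
    refine RecvOK_congr hOK ?_ ?_
    · intro hyp
      rw [ks_pushMsg, ks_setActor] at hyp
      split at hyp
      · simp at hyp
      · exact hyp
    · intro Φ' hyp
      rw [ks_pushMsg, ks_setActor] at hyp
      split at hyp
      · rename_i hA
        obtain rfl := Option.some.inj hyp
        refine Or.inr ⟨Φ, by rw [hA]; exact ks_eq_of_actors h1, fun j => ?_⟩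
        simp [Set.mem_setOf_eq]
      · exact Or.inr ⟨Φ', hyp, fun j => Iff.rfl⟩
  case release Φ μ x' n B h1 h2 h3 h4 =>
    rw [if_neg (by simp [Event.receivesAlong]), Nat.add_zero]
    refine RecvOK_congr hOK ?_ ?_
    · intro hyp
      rw [ks_withMsgs, ks_setActor] at hyp
      split at hyp
      · simp at hyp
      · exact hyp
    · intro Φ' hyp
      rw [ks_withMsgs, ks_setActor] at hyp
      split at hyp
      · rename_i hB
        obtain rfl := Option.some.inj hyp
        refine Or.inr ⟨Φ, by rw [hB]; exact ks_eq_of_actors h1, fun j => ?_⟩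
        simp
      · exact Or.inr ⟨Φ', hyp, fun j => Iff.rfl⟩
  case compaction Φ x' C h1 h2 h3 h4 =>
    rw [if_neg (by simp [Event.receivesAlong]), Nat.add_zero]
    have hx : x ≠ x' := by
      rintro rfl
      exact hNR _ _ (ks_eq_of_actors h1) h4
    refine RecvOK_congr hOK ?_ ?_
    · intro hyp
      rw [ks_setActor] at hyp
      split at hyp
      · simp at hyp
      · exact hyp
    · intro Φ' hyp
      rw [ks_setActor] at hyp
      split at hyp
      · rename_i hC
        obtain rfl := Option.some.inj hyp
        refine Or.inr ⟨Φ, by rw [hC]; exact ks_eq_of_actors h1, fun j => ?_⟩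
        simp [Set.mem_setOf_eq, hx]
      · exact Or.inr ⟨Φ', hyp, fun j => Iff.rfl⟩
  case snapshot Φ A h1 =>
    rw [if_neg (by simp [Event.receivesAlong]), Nat.add_zero]
    exact hOK
  case inp x' A R h1 h2 h3 h4 h5 =>
    rw [if_neg (by simp [Event.receivesAlong]), Nat.add_zero]
    exact hOK
  case out μ x' B R h1 h2 h3 =>
    rw [if_neg (by simp [Event.receivesAlong]), Nat.add_zero]
    exact hOK
  case releaseOut μ x' n B h1 h2 =>
    rw [if_neg (by simp [Event.receivesAlong]), Nat.add_zero]
    exact hOK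
  case infoOut μ y z C h1 h2 =>
    rw [if_neg (by simp [Event.receivesAlong]), Nat.add_zero]
    exact hOK

end Stmt2Aux4


section Stmt2Aux5

open scoped Classical

@[simp] lemma alongX_app {x y : Refob} {R : Set Refob} :
    AlongX x (Message.app y R) ↔ y = x := Iff.rfl
@[simp] lemma alongX_info {x y z : Refob} :
    AlongX x (Message.info y z) ↔ y = x := Iff.rfl
@[simp] lemma alongX_rel {x y : Refob} {n : ℕ} :
    AlongX x (Message.rel y n) ↔ False := Iff.rfl

lemma step_flow {k k' : Config} {ev : Event} {x : Refob}
    (h : Step k ev k') (hO : x.owner ∉ k.ext) (hT : x.target ∉ k.ext)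
    (hLoc : MsgLocal x k) :
    MsgLocal x k' ∧
      inflightK x k' + (if ev.receivesAlong x then 1 else 0) =
        inflightK x k + (if ev.sendsAlong x then 1 else 0) := by
  classical
  cases h
  case spawn Φ x0 y0 A B h1 h2 h3 h4 h5 =>
    exact ⟨fun C hC m hm => hLoc C hC m hm,
      by simp [Event.receivesAlong, Event.sendsAlong, inflightK, msgs_setActor]⟩
  case idle Φ A h1 =>
    exact ⟨fun C hC m hm => hLoc C hC m hm,
      by simp [Event.receivesAlong, Event.sendsAlong, inflightK, msgs_setActor]⟩
  case compaction Φ x' C h1 h2 h3 h4 =>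
    exact ⟨fun C hC m hm => hLoc C hC m hm,
      by simp [Event.receivesAlong, Event.sendsAlong, inflightK, msgs_setActor]⟩
  case snapshot Φ A h1 =>
    exact ⟨hLoc, by simp [Event.receivesAlong, Event.sendsAlong]⟩
  case send Φ x' l A B h1 h2 h3 h4 h5 h6 =>
    constructor
    · intro C hC m hm
      rw [msgs_pushMsg] at hm
      split at hm
      · rename_i hCB
        rcases Multiset.mem_cons.mp hm with rfl | hm'
        · intro hal
          have hx : x' = x := by simpa using hal
          exact hC (by rw [hCB, ← h3, hx])
        · exact hLoc C hC m (by rw [hCB]; exact hm')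
      · exact hLoc C hC m hm
    · rw [if_neg (show ¬ (Event.send x' l A B).receivesAlong x by
        simp [Event.receivesAlong])]
      by_cases hx : x = x'
      · rw [if_pos (show (Event.send x' l A B).sendsAlong x by
          simp [Event.sendsAlong, hx])]
        subst hx
        simp only [inflightK, msgs_pushMsg, msgs_setActor]
        rw [if_pos h3, Multiset.filter_cons_of_pos _ (by simp),
          Multiset.card_cons, h3]
      · rw [if_neg (show ¬ (Event.send x' l A B).sendsAlong x by
          simp [Event.sendsAlong, hx])]
        simp only [inflightK, msgs_pushMsg, msgs_setActor]
        split
        · rename_i htB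
          rw [Multiset.filter_cons_of_neg _ (by simpa using Ne.symm hx), htB]
        · rfl
  case sendInfo Φ y z A h1 h2 h3 h4 =>
    constructor
    · intro C hC m hm
      rw [msgs_pushMsg] at hm
      split at hm
      · rename_i hCB
        rcases Multiset.mem_cons.mp hm with rfl | hm'
        · intro hal
          have hx : y = x := by simpa using hal
          exact hC (by rw [hCB, ← hx])
        · exact hLoc C hC m (by rw [hCB]; exact hm')
      · exact hLoc C hC m hm
    · rw [if_neg (show ¬ (Event.sendInfo y z A).receivesAlong x by
        simp [Event.receivesAlong])]
      by_cases hx : x = y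
      · rw [if_pos (show (Event.sendInfo y z A).sendsAlong x by
          simp [Event.sendsAlong, hx])]
        subst hx
        simp only [inflightK, msgs_pushMsg, msgs_setActor]
        rw [if_pos trivial, Multiset.filter_cons_of_pos _ (by simp),
          Multiset.card_cons]
      · rw [if_neg (show ¬ (Event.sendInfo y z A).sendsAlong x by
          simp [Event.sendsAlong, hx])]
        simp only [inflightK, msgs_pushMsg, msgs_setActor]
        split
        · rename_i htB
          rw [Multiset.filter_cons_of_neg _ (by simpa using Ne.symm hx), htB]
        · rfl
  case sendRelease Φ x' n A h1 h2 h3 h4 h5 =>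
    constructor
    · intro C hC m hm
      rw [msgs_pushMsg] at hm
      split at hm
      · rename_i hCB
        rcases Multiset.mem_cons.mp hm with rfl | hm'
        · simp
        · exact hLoc C hC m (by rw [hCB]; exact hm')
      · exact hLoc C hC m hm
    · rw [if_neg (show ¬ (Event.sendRelease x' n A).receivesAlong x by
          simp [Event.receivesAlong]),
        if_neg (show ¬ (Event.sendRelease x' n A).sendsAlong x by
          simp [Event.sendsAlong])]
      simp only [inflightK, msgs_pushMsg, msgs_setActor]
      split
      · rename_i htB
        rw [Multiset.filter_cons_of_neg _ (by simp), htB]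
      · rfl
  case receive Φ μ x' B R h1 h2 h3 =>
    constructor
    · intro C hC m hm
      rw [msgs_withMsgs, Function.update_apply] at hm
      split at hm
      · rename_i hCB
        exact hLoc C hC m (by rw [hCB, h3]; exact Multiset.mem_cons_of_mem hm)
      · exact hLoc C hC m hm
    · by_cases hx : x = x'
      · rw [if_pos (show (Event.receive x' B R).receivesAlong x by
            simp [Event.receivesAlong, hx]),
          if_neg (show ¬ (Event.receive x' B R).sendsAlong x by
            simp [Event.sendsAlong])]
        subst hx
        simp only [inflightK, msgs_withMsgs, Function.update_apply]
        rw [if_pos h2, h2, h3, Multiset.filter_cons_of_pos _ (by simp),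
          Multiset.card_cons]
      · rw [if_neg (show ¬ (Event.receive x' B R).receivesAlong x by
            simp [Event.receivesAlong, hx]),
          if_neg (show ¬ (Event.receive x' B R).sendsAlong x by
            simp [Event.sendsAlong])]
        simp only [inflightK, msgs_withMsgs, Function.update_apply]
        split
        · rename_i htB
          rw [htB, h3, Multiset.filter_cons_of_neg _ (by simpa using Ne.symm hx)]
        · rfl
  case info Φ μ y z C0 h1 h2 h3 =>
    constructor
    · intro C hC m hm
      rw [msgs_withMsgs, Function.update_apply] at hm
      split at hm
      · rename_i hCB
        exact hLoc C hC m (by rw [hCB, h3]; exact Multiset.mem_cons_of_mem hm)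
      · exact hLoc C hC m hm
    · by_cases hx : x = y
      · rw [if_pos (show (Event.info y z C0).receivesAlong x by
            simp [Event.receivesAlong, hx]),
          if_neg (show ¬ (Event.info y z C0).sendsAlong x by
            simp [Event.sendsAlong])]
        subst hx
        simp only [inflightK, msgs_withMsgs, Function.update_apply]
        rw [if_pos h2, h2, h3, Multiset.filter_cons_of_pos _ (by simp),
          Multiset.card_cons]
      · rw [if_neg (show ¬ (Event.info y z C0).receivesAlong x by
            simp [Event.receivesAlong, hx]),
          if_neg (show ¬ (Event.info y z C0).sendsAlong x by
            simp [Event.sendsAlong])]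
        simp only [inflightK, msgs_withMsgs, Function.update_apply]
        split
        · rename_i htB
          rw [htB, h3, Multiset.filter_cons_of_neg _ (by simpa using Ne.symm hx)]
        · rfl
  case release Φ μ x' n B h1 h2 h3 h4 =>
    constructor
    · intro C hC m hm
      rw [msgs_withMsgs, Function.update_apply] at hm
      split at hm
      · rename_i hCB
        exact hLoc C hC m (by rw [hCB, h3]; exact Multiset.mem_cons_of_mem hm)
      · exact hLoc C hC m hm
    · rw [if_neg (show ¬ (Event.release x' n B).receivesAlong x by
          simp [Event.receivesAlong]),
        if_neg (show ¬ (Event.release x' n B).sendsAlong x by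
          simp [Event.sendsAlong])]
      simp only [inflightK, msgs_withMsgs, Function.update_apply]
      split
      · rename_i htB
        rw [htB, h3, Multiset.filter_cons_of_neg _ (by simp)]
      · rfl
  case inp x' A R h1 h2 h3 h4 h5 =>
    have hx : x' ≠ x := by
      rintro rfl
      exact hO h3
    constructor
    · intro C hC m hm
      rw [show (Config.msgs _) = (k.pushMsg A (Message.app x' R)).msgs from rfl,
        msgs_pushMsg] at hm
      split at hm
      · rename_i hCB
        rcases Multiset.mem_cons.mp hm with rfl | hm'
        · simp [hx]
        · exact hLoc C hC m (by rw [hCB]; exact hm')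
      · exact hLoc C hC m hm
    · rw [if_neg (show ¬ (Event.inp x' A R).receivesAlong x by
          simp [Event.receivesAlong]),
        if_neg (show ¬ (Event.inp x' A R).sendsAlong x by
          simp [Event.sendsAlong])]
      show (Multiset.filter (AlongX x) ((k.pushMsg A (Message.app x' R)).msgs x.target)).card + 0 =
        (Multiset.filter (AlongX x) (k.msgs x.target)).card + 0
      rw [msgs_pushMsg]
      split
      · rename_i htB
        rw [Multiset.filter_cons_of_neg _ (by simp [hx]), ← htB]
      · rfl
  case out μ x' B R h1 h2 h3 =>
    have hB : B ≠ x.target := by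
      rintro rfl
      exact hT h1
    constructor
    · intro C hC m hm
      rw [show (Config.msgs _) = Function.update k.msgs B μ from rfl,
        Function.update_apply] at hm
      split at hm
      · rename_i hCB
        exact hLoc C hC m (by rw [hCB, h2]; exact Multiset.mem_cons_of_mem hm)
      · exact hLoc C hC m hm
    · rw [if_neg (show ¬ (Event.out x' B R).receivesAlong x by
          simp [Event.receivesAlong]),
        if_neg (show ¬ (Event.out x' B R).sendsAlong x by
          simp [Event.sendsAlong])]
      show (Multiset.filter (AlongX x) (Function.update k.msgs B μ x.target)).card + 0 =
        (Multiset.filter (AlongX x) (k.msgs x.target)).card + 0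
      rw [Function.update_apply, if_neg (fun h => hB h.symm)]
  case releaseOut μ x' n B h1 h2 =>
    have hB : B ≠ x.target := by
      rintro rfl
      exact hT h1
    constructor
    · intro C hC m hm
      rw [show (Config.msgs _) = Function.update k.msgs B μ from rfl,
        Function.update_apply] at hm
      split at hm
      · rename_i hCB
        exact hLoc C hC m (by rw [hCB, h2]; exact Multiset.mem_cons_of_mem hm)
      · exact hLoc C hC m hm
    · rw [if_neg (show ¬ (Event.releaseOut x' n B).receivesAlong x by
          simp [Event.receivesAlong]),
        if_neg (show ¬ (Event.releaseOut x' n B).sendsAlong x by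
          simp [Event.sendsAlong])]
      show (Multiset.filter (AlongX x) (Function.update k.msgs B μ x.target)).card + 0 =
        (Multiset.filter (AlongX x) (k.msgs x.target)).card + 0
      rw [Function.update_apply, if_neg (fun h => hB h.symm)]
  case infoOut μ y z B h1 h2 =>
    have hB : B ≠ x.target := by
      rintro rfl
      exact hT h1
    constructor
    · intro C hC m hm
      rw [show (Config.msgs _) = Function.update k.msgs B μ from rfl,
        Function.update_apply] at hm
      split at hm
      · rename_i hCB
        exact hLoc C hC m (by rw [hCB, h2]; exact Multiset.mem_cons_of_mem hm)
      · exact hLoc C hC m hm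
    · rw [if_neg (show ¬ (Event.infoOut y z B).receivesAlong x by
          simp [Event.receivesAlong]),
        if_neg (show ¬ (Event.infoOut y z B).sendsAlong x by
          simp [Event.sendsAlong])]
      show (Multiset.filter (AlongX x) (Function.update k.msgs B μ x.target)).card + 0 =
        (Multiset.filter (AlongX x) (k.msgs x.target)).card + 0
      rw [Function.update_apply, if_neg (fun h => hB h.symm)]

end Stmt2Aux5

section Stmt2Main

open scoped Classical

lemma main_inv (e : Exec) (x : Refob)
    (hO : ∀ t, x.owner ∉ (e.cfg t).ext) (hT : ∀ t, x.target ∉ (e.cfg t).ext) :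
    ∀ t, MsgLocal x (e.cfg t) ∧
      e.sentCt x t = e.recvCt x t + inflightK x (e.cfg t) ∧
      ((∀ s < t, ¬ (e.ev s).deactivates x) → SentOK x (e.cfg t) (e.sentCt x t)) ∧
      ((∀ s < t, ¬ (e.ev s).releases x) →
        RecvOK x (e.cfg t) (e.recvCt x t) ∧ NoRel x (e.cfg t)) := by
  intro t
  induction t with
  | zero =>
    obtain ⟨A, E, x0, y0, hAE, hxy, hact, hmsgs, hrecep, hext⟩ := e.init
    have hks : ∀ C, (e.cfg 0).ks C = none ∨
        (e.cfg 0).ks C = some {Fact.activated ⟨x0, A, E⟩, Fact.created ⟨y0, A, A⟩,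
          Fact.activated ⟨y0, A, A⟩} := by
      intro C
      rw [Config.ks, hact, Function.update_apply]
      split
      · right; rfl
      · left; rfl
    refine ⟨?_, ?_, ?_, ?_⟩
    · intro C hC mm hm
      rw [hmsgs] at hm
      simp at hm
    · rw [sentCt_zero, recvCt_zero]
      simp [inflightK, hmsgs]
    · intro _
      rw [sentCt_zero]
      refine ⟨fun _ => rfl, fun Φ hΦ => ?_⟩
      rcases hks x.owner with h | h
      · rw [h] at hΦ; simp at hΦ
      · rw [h] at hΦ
        obtain rfl := Option.some.inj hΦ
        exact ⟨fun j hj => absurd hj (by simp), fun h0 => absurd rfl h0⟩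
    · intro _
      rw [recvCt_zero]
      refine ⟨⟨fun _ => rfl, fun Φ hΦ => ?_⟩, fun C Φ hΦ => ?_⟩
      · rcases hks x.target with h | h
        · rw [h] at hΦ; simp at hΦ
        · rw [h] at hΦ
          obtain rfl := Option.some.inj hΦ
          exact ⟨fun j hj => absurd hj (by simp), fun h0 => absurd rfl h0⟩
      · rcases hks C with h | h
        · rw [h] at hΦ; simp at hΦ
        · rw [h] at hΦ
          obtain rfl := Option.some.inj hΦ
          simp
  | succ t ih =>
    obtain ⟨ihL, ihF, ihS, ihR⟩ := ih
    have hstep := e.step t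
    obtain ⟨hL', hflow⟩ := step_flow hstep (hO t) (hT t) ihL
    refine ⟨hL', ?_, ?_, ?_⟩
    · rw [sentCt_succ, recvCt_succ]
      omega
    · intro hnd
      rw [sentCt_succ]
      exact step_sent hstep (hnd t (Nat.lt_succ_self t))
        (ihS fun s hs => hnd s (Nat.lt_succ_of_lt hs))
    · intro hnr
      have ihR' := ihR fun s hs => hnr s (Nat.lt_succ_of_lt hs)
      rw [recvCt_succ]
      exact ⟨step_recv hstep (hnr t (Nat.lt_succ_self t)) ihR'.1 ihR'.2,
        step_norel hstep (hnr t (Nat.lt_succ_self t)) ihR'.2⟩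

lemma entails_sent {x : Refob} {Φ : Set Fact} {N n : ℕ}
    (h1 : ∀ j, Fact.sentCount x j ∈ Φ → j = N)
    (h2 : N ≠ 0 → Fact.sentCount x N ∈ Φ)
    (hE : Entails Φ (Fact.sentCount x n)) : n = N := by
  cases hE with
  | mem h => exact h1 _ h
  | sentZero h =>
    by_contra hn
    exact h N (h2 fun hN => hn hN.symm)

lemma entails_recv {x : Refob} {Φ : Set Fact} {N n : ℕ}
    (h1 : ∀ j, Fact.recvCount x j ∈ Φ → j = N)
    (h2 : N ≠ 0 → Fact.recvCount x N ∈ Φ)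
    (hE : Entails Φ (Fact.recvCount x n)) : n = N := by
  cases hE with
  | mem h => exact h1 _ h
  | recvZero h =>
    by_contra hn
    exact h N (h2 fun hN => hn hN.symm)

end Stmt2Main

/-- message-count lemma. If `x = (x,A,B)` has not been deactivated
before `t1` and not been released before `t2`, `A`'s knowledge at `t1` entails
`SentCount(x,n)`, `B`'s knowledge at `t2` entails `RecvCount(x,m)`, and (if
`t1 < t2`) `A` sends no messages along `x` during `[t1,t2]`, then `max (n-m) 0`
(which is `n - m` in ℕ) equals the number of messages sent along `x` before
`t1` that were not received before `t2`: the count of sends before `t1` minus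
the count of receives before `t2` (every receive before `t2` being of a
message sent before `t1`). -/
theorem stmt2 (e : Exec) (x : Refob) (t1 t2 n m : ℕ)
    (hdeact : ∀ s < t1, ¬ (e.ev s).deactivates x)
    (hrel : ∀ s < t2, ¬ (e.ev s).releases x)
    (hA : ∃ Φ, (e.cfg t1).ks x.owner = some Φ ∧ Entails Φ (Fact.sentCount x n))
    (hB : ∃ Φ, (e.cfg t2).ks x.target = some Φ ∧ Entails Φ (Fact.recvCount x m))
    (hquiet : t1 < t2 → ∀ s, t1 ≤ s → s ≤ t2 → ¬ (e.ev s).sendsAlong x) :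
    e.recvCt x t2 ≤ e.sentCt x t1 ∧ n - m = e.sentCt x t1 - e.recvCt x t2 := by
  classical
  obtain ⟨ΦA, hksA, hEA⟩ := hA
  obtain ⟨ΦB, hksB, hEB⟩ := hB
  have hOint : (e.cfg t1).actors x.owner ≠ none := by
    intro h; rw [Config.ks, h] at hksA; simp at hksA
  have hTint : (e.cfg t2).actors x.target ≠ none := by
    intro h; rw [Config.ks, h] at hksB; simp at hksB
  have inv := main_inv e x (never_ext e hOint) (never_ext e hTint)
  have hSOK := (inv t1).2.2.1 hdeact
  have hROK := ((inv t2).2.2.2 hrel).1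
  obtain ⟨s1, s2⟩ := hSOK.2 ΦA hksA
  obtain ⟨r1, r2⟩ := hROK.2 ΦB hksB
  have hn : n = e.sentCt x t1 := entails_sent s1 s2 hEA
  have hm : m = e.recvCt x t2 := entails_recv r1 r2 hEB
  have hflow2 := (inv t2).2.1
  have hle : e.recvCt x t2 ≤ e.sentCt x t1 := by
    rcases le_or_gt t2 t1 with h | h
    · exact le_trans (by omega) (sentCt_mono e x h)
    · have heq : e.sentCt x t2 = e.sentCt x t1 := by
        have key : ∀ d, t1 + d ≤ t2 → e.sentCt x (t1 + d) = e.sentCt x t1 := by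
          intro d
          induction d with
          | zero => intro _; rfl
          | succ d ihd =>
            intro hd
            rw [show t1 + (d + 1) = (t1 + d) + 1 from rfl, sentCt_succ,
              if_neg (hquiet h (t1 + d) (by omega) (by omega)), Nat.add_zero]
            exact ihd (by omega)
        have hd := key (t2 - t1) (by omega)
        rwa [show t1 + (t2 - t1) = t2 from by omega] at hd
      omega
  exact ⟨hle, by omega⟩

end DRL
end
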